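/- arXiv:1501.06966 — 4 statements merged into one kernel-verified Lean document; each statement's English description precedes it below -/
import Mathlib

section
/- Let × be a 2-fold vector cross product on a real inner product space V and let ξ ∈ V with ‖ξ‖ = 1. Define φ(x) = ξ × x and η(x) = ⟪ξ, x⟫. Then (φ, ξ, η) is an almost contact structure on V, i.e., φ(φ(x)) = −x + η(x) • ξ for all x ∈ V and η(ξ) = 1. -/
open scoped RealInnerProductSpace

/-- Given a 2-fold vector cross product `×` and a unit vector `ξ`, the triple
`(φ, ξ, η)` with `φ x = ξ × x` and `η x = ⟪ξ, x⟫` is an almost contact structure: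
`φ (φ x) = -x + η x • ξ` and `η ξ = 1`. -/
theorem cross_product_gives_almost_contact
    {V : Type*} [NormedAddCommGroup V] [InnerProductSpace ℝ V]
    (cross : V →ₗ[ℝ] V →ₗ[ℝ] V)
    (h1 : ∀ u v : V, ⟪cross u v, u⟫ = 0)
    (h2 : ∀ u v : V, ⟪cross u v, v⟫ = 0)
    (h3 : ∀ u v : V, ‖cross u v‖ ^ 2 = ‖u‖ ^ 2 * ‖v‖ ^ 2 - ⟪u, v⟫ ^ 2)
    (ξ : V) (hξ : ‖ξ‖ = 1) :
    (∀ x : V, cross ξ (cross ξ x) = -x + ⟪ξ, x⟫ • ξ) ∧ ⟪ξ, ξ⟫ = 1 := by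
  have hξξ : ⟪ξ, ξ⟫ = 1 := by
    rw [real_inner_self_eq_norm_sq, hξ]; ring
  -- polarization of h2: ⟪cross u v, w⟫ = -⟪cross u w, v⟫
  have hA : ∀ u v w : V, ⟪cross u v, w⟫ = -⟪cross u w, v⟫ := by
    intro u v w
    have h := h2 u (v + w)
    simp only [map_add, inner_add_left, inner_add_right, h2 u v, h2 u w] at h
    linarith
  -- polarization of h3: ⟪cross u v, cross u w⟫ = ⟪u,u⟫⟪v,w⟫ - ⟪u,v⟫⟪u,w⟫
  have hB : ∀ u v w : V, ⟪cross u v, cross u w⟫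
      = ⟪u, u⟫ * ⟪v, w⟫ - ⟪u, v⟫ * ⟪u, w⟫ := by
    intro u v w
    have h := h3 u (v + w)
    rw [← real_inner_self_eq_norm_sq, ← real_inner_self_eq_norm_sq,
      ← real_inner_self_eq_norm_sq] at h
    have hv := h3 u v
    have hw := h3 u w
    rw [← real_inner_self_eq_norm_sq, ← real_inner_self_eq_norm_sq,
      ← real_inner_self_eq_norm_sq] at hv
    rw [← real_inner_self_eq_norm_sq, ← real_inner_self_eq_norm_sq,
      ← real_inner_self_eq_norm_sq] at hw
    simp only [map_add, inner_add_left, inner_add_right] at h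
    linear_combination h/2 - hv/2 - hw/2
      + (real_inner_comm ((cross u) w) ((cross u) v))/2
      - ((⟪u, u⟫ : ℝ)/2) * (real_inner_comm w v)
  refine ⟨fun x => ?_, hξξ⟩
  apply ext_inner_right ℝ
  intro y
  have := hA ξ (cross ξ x) y
  rw [this, hB ξ y x, hξξ]
  rw [inner_add_left, inner_neg_left, inner_smul_left]
  simp only [conj_trivial]
  rw [real_inner_comm y x]
  ring
end

section
/- Let × be a 2-fold vector cross product on a real inner product space V that in addition satisfies the quadruple identity u × ((u × v) × x) = −(u × v) × (u × x) + u × (u × (v × x)) + (u × (u × x)) × v for all u, v, x ∈ V. Let u, v ∈ V with ‖u‖ = 1 and u × v ≠ 0, and set ξ₁ = u and ξ₂ = ‖u × v‖⁻¹ • (u × v). Then for all x ∈ V: ξ₁ × (ξ₂ × x) − ⟪ξ₂, x⟫ • ξ₁ = −(ξ₂ × (ξ₁ × x)) + ⟪ξ₁, x⟫ • ξ₂. -/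
open scoped RealInnerProductSpace

/-- For a 2-fold vector cross product satisfying the quadruple identity, with `ξ₁ = u`
a unit vector and `ξ₂` the normalization of `u × v ≠ 0`, one has
`ξ₁ × (ξ₂ × x) - ⟪ξ₂, x⟫ • ξ₁ = -(ξ₂ × (ξ₁ × x)) + ⟪ξ₁, x⟫ • ξ₂`. -/
theorem cross_product_kuo_compatibility
    {V : Type*} [NormedAddCommGroup V] [InnerProductSpace ℝ V]
    (cross : V →ₗ[ℝ] V →ₗ[ℝ] V)
    (h1 : ∀ u v : V, ⟪cross u v, u⟫ = 0)
    (h2 : ∀ u v : V, ⟪cross u v, v⟫ = 0)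
    (h3 : ∀ u v : V, ‖cross u v‖ ^ 2 = ‖u‖ ^ 2 * ‖v‖ ^ 2 - ⟪u, v⟫ ^ 2)
    (hq : ∀ u v x : V,
      cross u (cross (cross u v) x) =
        -(cross (cross u v) (cross u x)) + cross u (cross u (cross v x)) +
          cross (cross u (cross u x)) v)
    (u v : V) (hu : ‖u‖ = 1) (huv : cross u v ≠ 0)
    (ξ₁ ξ₂ : V) (hξ₁ : ξ₁ = u) (hξ₂ : ξ₂ = ‖cross u v‖⁻¹ • cross u v) :
    ∀ x : V,
      cross ξ₁ (cross ξ₂ x) - ⟪ξ₂, x⟫ • ξ₁ =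
        -(cross ξ₂ (cross ξ₁ x)) + ⟪ξ₁, x⟫ • ξ₂ := by
  -- polarized orthogonality: ⟪a×b, c⟫ = -⟪a×c, b⟫
  have hA : ∀ a b c : V, ⟪cross a b, c⟫ = -⟪cross a c, b⟫ := by
    intro a b c
    have := h2 a (b + c)
    simp only [map_add, inner_add_left, inner_add_right, h2] at this
    linarith
  -- cross a a = 0
  have hB : ∀ a : V, cross a a = 0 := by
    intro a
    have h := h3 a a
    rw [← real_inner_self_eq_norm_sq a] at h
    have : ‖cross a a‖ ^ 2 = 0 := by rw [h]; ring
    have : ‖cross a a‖ = 0 := by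
      nlinarith [norm_nonneg (cross a a)]
    simpa using this
  -- anticommutativity
  have hC : ∀ a b : V, cross a b = -cross b a := by
    intro a b
    have h := hB (a + b)
    simp only [map_add, LinearMap.add_apply, hB] at h
    have : cross a b + cross b a = 0 := by
      rw [← h]; abel
    linear_combination (norm := abel) this
  -- triple product symmetry
  have hD : ∀ a b c : V, ⟪cross a b, c⟫ = ⟪a, cross b c⟫ := by
    intro a b c
    calc ⟪cross a b, c⟫ = -⟪cross b a, c⟫ := by rw [hC a b]; simp
      _ = ⟪cross b c, a⟫ := by rw [hA b c a]
      _ = ⟪a, cross b c⟫ := real_inner_comm _ _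
  -- inner of crosses
  have hE : ∀ a x z : V, ⟪cross a x, cross a z⟫ = ‖a‖ ^ 2 * ⟪x, z⟫ - ⟪a, x⟫ * ⟪a, z⟫ := by
    intro a x z
    have h := h3 a (x + z)
    have h' := h3 a x
    have h'' := h3 a z
    rw [← real_inner_self_eq_norm_sq (cross a (x+z)),
        ← real_inner_self_eq_norm_sq (x + z)] at h
    rw [← real_inner_self_eq_norm_sq (cross a x), ← real_inner_self_eq_norm_sq x] at h'
    rw [← real_inner_self_eq_norm_sq (cross a z), ← real_inner_self_eq_norm_sq z] at h''
    simp only [map_add, inner_add_left, inner_add_right] at h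
    nlinarith [h, h', h'', real_inner_comm ((cross a) x) ((cross a) z),
      real_inner_comm x z]
  -- double cross formula
  have hF : ∀ a x : V, cross a (cross a x) = ⟪a, x⟫ • a - ‖a‖ ^ 2 • x := by
    intro a x
    apply ext_inner_right ℝ
    intro z
    rw [hA a (cross a x) z, hE a z x]
    simp only [inner_sub_left, inner_smul_left, real_inner_self_eq_norm_sq,
      RCLike.ofReal_real_eq_id, id_eq, real_inner_smul_left, starRingEnd_apply, star_trivial]
    nlinarith [real_inner_comm a x, real_inner_comm a z, real_inner_comm x z]
  intro x
  rw [hξ₁, hξ₂]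
  set w := cross u v with hw
  -- the unscaled identity
  have key : cross u (cross w x) - ⟪w, x⟫ • u = -(cross w (cross u x)) + ⟪u, x⟫ • w := by
    have hq' := hq u v x
    rw [← hw] at hq'
    have e1 : cross u (cross u (cross v x)) = ⟪w, x⟫ • u - cross v x := by
      rw [hF u (cross v x), hu]
      have : ⟪u, cross v x⟫ = ⟪w, x⟫ := (hD u v x).symm
      rw [this]; simp
    have e2 : cross (cross u (cross u x)) v = ⟪u, x⟫ • w + cross v x := by
      rw [hF u x, hu]
      simp only [map_sub, map_smul, LinearMap.sub_apply, LinearMap.smul_apply, one_pow, one_smul]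
      rw [hC x v]
      abel
    rw [e1, e2] at hq'
    rw [hq']
    abel
  have hc : (0:ℝ) ≤ ‖w‖⁻¹ := by positivity
  calc cross u (cross (‖w‖⁻¹ • w) x) - ⟪‖w‖⁻¹ • w, x⟫ • u
      = ‖w‖⁻¹ • (cross u (cross w x) - ⟪w, x⟫ • u) := by
        simp only [map_smul, LinearMap.smul_apply, inner_smul_left, RCLike.ofReal_real_eq_id,
          id_eq, smul_sub, smul_smul, starRingEnd_apply, star_trivial]
    _ = ‖w‖⁻¹ • (-(cross w (cross u x)) + ⟪u, x⟫ • w) := by rw [key]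
    _ = -(cross (‖w‖⁻¹ • w) (cross u x)) + ⟪u, x⟫ • ‖w‖⁻¹ • w := by
        simp only [map_smul, LinearMap.smul_apply, smul_add, smul_neg, smul_smul]
        rw [mul_comm]
end

section
/- Let V be a real vector space and let (φ₁, ξ₁, η₁) and (φ₂, ξ₂, η₂) be two almost contact structures on V satisfying: η₁(ξ₂) = η₂(ξ₁) = 0; φ₁(ξ₂) = −φ₂(ξ₁); η₁ ∘ φ₂ = −η₂ ∘ φ₁; and φ₁(φ₂(x)) − η₂(x) • ξ₁ = −φ₂(φ₁(x)) + η₁(x) • ξ₂ for all x ∈ V. Define φ₃(x) = φ₁(φ₂(x)) − η₂(x) • ξ₁, ξ₃ = φ₁(ξ₂), and η₃ = η₁ ∘ φ₂. Then (φ₃, ξ₃, η₃) is an almost contact structure on V, i.e., φ₃(φ₃(x)) = −x + η₃(x) • ξ₃ for all x ∈ V and η₃(ξ₃) = 1. -/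
lemma ac_phi_xi {V : Type*} [AddCommGroup V] [Module ℝ V]
    (φ : V →ₗ[ℝ] V) (ξ : V) (η : V →ₗ[ℝ] ℝ)
    (hφ : ∀ x : V, φ (φ x) = -x + η x • ξ) (hη : η ξ = 1) : φ ξ = 0 := by
  have h0 : φ (φ ξ) = 0 := by rw [hφ]; simp [hη]
  have h1 : φ ξ = η (φ ξ) • ξ := by
    have := hφ (φ ξ)
    rw [h0] at this
    simp only [map_zero] at this
    linear_combination (norm := module) this
  have h2 : (η (φ ξ))^2 • ξ = 0 := by
    have hc : η (φ ξ) • φ ξ = 0 := by rw [← map_smul, ← h1, h0]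
    rw [sq, ← smul_smul, ← h1]; exact hc
  have h3 : (η (φ ξ))^2 = 0 := by
    have := congrArg η h2
    simpa [hη] using this
  have h4 : η (φ ξ) = 0 := by nlinarith [sq_nonneg (η (φ ξ))]
  rw [h1, h4, zero_smul]

lemma ac_eta_phi {V : Type*} [AddCommGroup V] [Module ℝ V]
    (φ : V →ₗ[ℝ] V) (ξ : V) (η : V →ₗ[ℝ] ℝ)
    (hφ : ∀ x : V, φ (φ x) = -x + η x • ξ) (hη : η ξ = 1) (x : V) : η (φ x) = 0 := by
  have hxi := ac_phi_xi φ ξ η hφ hη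
  have h1 : φ (φ (φ x)) = -φ x := by
    rw [hφ x, map_add, map_neg, map_smul, hxi, smul_zero, add_zero]
  have h2 := hφ (φ x)
  rw [h1] at h2
  have h3 : η (φ x) • ξ = 0 := by linear_combination (norm := module) -h2
  have := congrArg η h3
  simpa [hη] using this

/-- (Kuo) Two almost contact structures `(φ₁, ξ₁, η₁)`, `(φ₂, ξ₂, η₂)` satisfying the
compatibility relations induce a third almost contact structure `(φ₃, ξ₃, η₃)` with
`φ₃ = φ₁ ∘ φ₂ - η₂ ⊗ ξ₁`, `ξ₃ = φ₁ ξ₂`, `η₃ = η₁ ∘ φ₂`. -/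
theorem kuo_third_almost_contact_structure
    {V : Type*} [AddCommGroup V] [Module ℝ V]
    (φ₁ φ₂ : V →ₗ[ℝ] V) (ξ₁ ξ₂ : V) (η₁ η₂ : V →ₗ[ℝ] ℝ)
    (hφ₁ : ∀ x : V, φ₁ (φ₁ x) = -x + η₁ x • ξ₁) (hη₁ : η₁ ξ₁ = 1)
    (hφ₂ : ∀ x : V, φ₂ (φ₂ x) = -x + η₂ x • ξ₂) (hη₂ : η₂ ξ₂ = 1)
    (h12 : η₁ ξ₂ = 0) (h21 : η₂ ξ₁ = 0)
    (hphixi : φ₁ ξ₂ = -φ₂ ξ₁)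
    (hetaphi : ∀ x : V, η₁ (φ₂ x) = -η₂ (φ₁ x))
    (hphiphi : ∀ x : V, φ₁ (φ₂ x) - η₂ x • ξ₁ = -φ₂ (φ₁ x) + η₁ x • ξ₂)
    (φ₃ : V →ₗ[ℝ] V) (hφ₃def : ∀ x : V, φ₃ x = φ₁ (φ₂ x) - η₂ x • ξ₁)
    (ξ₃ : V) (hξ₃def : ξ₃ = φ₁ ξ₂)
    (η₃ : V →ₗ[ℝ] ℝ) (hη₃def : ∀ x : V, η₃ x = η₁ (φ₂ x)) :
    (∀ x : V, φ₃ (φ₃ x) = -x + η₃ x • ξ₃) ∧ η₃ ξ₃ = 1 := by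
  have hp2 : φ₂ ξ₂ = 0 := ac_phi_xi φ₂ ξ₂ η₂ hφ₂ hη₂
  constructor
  · intro x
    have key1 : φ₂ (φ₃ x) = φ₁ x - η₂ (φ₁ x) • ξ₂ := by
      rw [hφ₃def, hphiphi, map_add, map_neg, map_smul, hφ₂, hp2, smul_zero, add_zero]
      module
    have key2 : η₂ (φ₃ x) = η₁ x := by
      have h := hetaphi (φ₂ x)
      rw [hφ₂] at h
      simp only [map_add, map_neg, map_smul, smul_eq_mul, h12, mul_zero, add_zero] at h
      rw [hφ₃def]
      simp only [map_sub, map_smul, smul_eq_mul, h21, mul_zero, sub_zero]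
      linarith
    rw [hφ₃def (φ₃ x), key1, key2, map_sub, map_smul, hφ₁, hη₃def, hetaphi, hξ₃def]
    module
  · rw [hη₃def, hξ₃def, hphixi, map_neg, map_neg, hφ₂]
    simp [hη₁, h21]
end

section
/- Let V be a real inner product space and let (φ₁, ξ₁, η₁) and (φ₂, ξ₂, η₂) be two almost contact structures on V, each compatible with the inner product, such that φ₁(φ₂(x)) − η₂(x) • ξ₁ = −φ₂(φ₁(x)) + η₁(x) • ξ₂ for all x ∈ V. Then η₁(ξ₂) = η₂(ξ₁) = 0, φ₁(ξ₂) = −φ₂(ξ₁), and η₁(φ₂(x)) = −η₂(φ₁(x)) for all x ∈ V. -/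
open scoped RealInnerProductSpace

lemma acs_aux {V : Type*} [NormedAddCommGroup V] [InnerProductSpace ℝ V]
    (φ : V →ₗ[ℝ] V) (ξ : V) (η : V →ₗ[ℝ] ℝ)
    (hφ : ∀ x : V, φ (φ x) = -x + η x • ξ) (hη : η ξ = 1)
    (hcompat : ∀ x y : V, ⟪φ x, φ y⟫ = ⟪x, y⟫ - η x * η y) :
    φ ξ = 0 ∧ (∀ x : V, η x = ⟪x, ξ⟫) ∧ (∀ x : V, η (φ x) = 0) ∧
      (∀ x y : V, ⟪φ x, y⟫ = -⟪x, φ y⟫) := by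
  have hξφξ : φ (φ ξ) = 0 := by rw [hφ ξ, hη, one_smul, neg_add_cancel]
  have h3 : φ ξ = η (φ ξ) • ξ := by
    have h := hφ (φ ξ)
    rw [hξφξ, map_zero] at h
    exact (neg_add_eq_zero.mp h.symm)
  have hc : η (φ ξ) = 0 := by
    have h4 : (η (φ ξ) * η (φ ξ)) • ξ = 0 := by
      calc (η (φ ξ) * η (φ ξ)) • ξ = η (φ ξ) • (η (φ ξ) • ξ) := mul_smul _ _ _
        _ = η (φ ξ) • φ ξ := by rw [← h3]
        _ = φ (η (φ ξ) • ξ) := (map_smul φ _ _).symm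
        _ = φ (φ ξ) := by rw [← h3]
        _ = 0 := hξφξ
    have h5 := congrArg η h4
    rw [map_smul, map_zero, smul_eq_mul, hη, mul_one] at h5
    exact mul_self_eq_zero.mp h5
  have hφξ : φ ξ = 0 := by rw [h3, hc, zero_smul]
  have heta : ∀ x : V, η x = ⟪x, ξ⟫ := by
    intro x
    have h := hcompat x ξ
    rw [hφξ, inner_zero_right, hη, mul_one] at h
    linarith
  have hetaφ : ∀ x : V, η (φ x) = 0 := by
    intro x
    have h1 := hφ (φ x)
    have h2 : φ (φ (φ x)) = -φ x := by
      rw [hφ x, map_add, map_neg, map_smul, hφξ, smul_zero, add_zero]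
    rw [h2] at h1
    have h3' : η (φ x) • ξ = 0 := by
      have := congrArg (· + φ x) h1
      simpa [neg_add_cancel, add_assoc, add_comm] using this.symm
    have h4 := congrArg η h3'
    rw [map_smul, map_zero, smul_eq_mul, hη, mul_one] at h4
    exact h4
  refine ⟨hφξ, heta, hetaφ, ?_⟩
  intro x y
  have h := hcompat x (φ y)
  rw [hetaφ y, mul_zero, sub_zero, hφ y, inner_add_right, inner_neg_right,
    real_inner_smul_right, ← heta (φ x), hetaφ x, mul_zero, add_zero] at h
  linarith

/-- (Kuo) For two almost contact structures on a real inner product space, each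
compatible with the inner product, the relation
`φ₁ ∘ φ₂ - η₂ ⊗ ξ₁ = -(φ₂ ∘ φ₁) + η₁ ⊗ ξ₂` implies the other three compatibility
relations: `η₁ ξ₂ = η₂ ξ₁ = 0`, `φ₁ ξ₂ = -φ₂ ξ₁` and `η₁ ∘ φ₂ = -η₂ ∘ φ₁`. -/
theorem kuo_relations_from_phi_relation
    {V : Type*} [NormedAddCommGroup V] [InnerProductSpace ℝ V]
    (φ₁ φ₂ : V →ₗ[ℝ] V) (ξ₁ ξ₂ : V) (η₁ η₂ : V →ₗ[ℝ] ℝ)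
    (hφ₁ : ∀ x : V, φ₁ (φ₁ x) = -x + η₁ x • ξ₁) (hη₁ : η₁ ξ₁ = 1)
    (hφ₂ : ∀ x : V, φ₂ (φ₂ x) = -x + η₂ x • ξ₂) (hη₂ : η₂ ξ₂ = 1)
    (hcompat₁ : ∀ x y : V, ⟪φ₁ x, φ₁ y⟫ = ⟪x, y⟫ - η₁ x * η₁ y)
    (hcompat₂ : ∀ x y : V, ⟪φ₂ x, φ₂ y⟫ = ⟪x, y⟫ - η₂ x * η₂ y)
    (hphiphi : ∀ x : V, φ₁ (φ₂ x) - η₂ x • ξ₁ = -φ₂ (φ₁ x) + η₁ x • ξ₂) :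
    η₁ ξ₂ = 0 ∧ η₂ ξ₁ = 0 ∧ φ₁ ξ₂ = -φ₂ ξ₁ ∧ ∀ x : V, η₁ (φ₂ x) = -η₂ (φ₁ x) := by
  obtain ⟨hφξ₁, heta₁, hetaφ₁, hskew₁⟩ := acs_aux φ₁ ξ₁ η₁ hφ₁ hη₁ hcompat₁
  obtain ⟨hφξ₂, heta₂, hetaφ₂, hskew₂⟩ := acs_aux φ₂ ξ₂ η₂ hφ₂ hη₂ hcompat₂
  -- a = b since both equal ⟪ξ₁, ξ₂⟫
  have hab : η₁ ξ₂ = η₂ ξ₁ := by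
    rw [heta₁ ξ₂, heta₂ ξ₁, real_inner_comm]
  -- relation at ξ₂ : -ξ₁ = -φ₂ (φ₁ ξ₂) + η₁ ξ₂ • ξ₂
  have hA : -ξ₁ = -φ₂ (φ₁ ξ₂) + η₁ ξ₂ • ξ₂ := by
    have h := hphiphi ξ₂
    rwa [hφξ₂, map_zero, hη₂, one_smul, zero_sub] at h
  -- apply η₂ to hA : -η₂ ξ₁ = η₁ ξ₂
  have hba : -η₂ ξ₁ = η₁ ξ₂ := by
    have h := congrArg η₂ hA
    rw [map_neg, map_add, map_neg, map_smul, hetaφ₂, smul_eq_mul, hη₂, mul_one,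
      neg_zero, zero_add] at h
    exact h
  have ha : η₁ ξ₂ = 0 := by linarith [hab, hba]
  have hb : η₂ ξ₁ = 0 := by linarith [hab]
  -- relation at ξ₁ : φ₁ (φ₂ ξ₁) = ξ₂
  have hB : φ₁ (φ₂ ξ₁) = ξ₂ := by
    have h := hphiphi ξ₁
    rwa [hb, zero_smul, sub_zero, hφξ₁, map_zero, neg_zero, zero_add, hη₁, one_smul] at h
  -- apply φ₁ to hB
  have hC : -φ₂ ξ₁ + η₁ (φ₂ ξ₁) • ξ₁ = φ₁ ξ₂ := by
    have h := congrArg φ₁ hB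
    rwa [hφ₁ (φ₂ ξ₁)] at h
  have hd : η₁ (φ₂ ξ₁) = 0 := by
    rw [heta₁ (φ₂ ξ₁)]
    have := hskew₂ ξ₁ ξ₁
    have h2 : ⟪φ₂ ξ₁, ξ₁⟫ = ⟪ξ₁, φ₂ ξ₁⟫ := real_inner_comm _ _
    linarith
  have hmain : φ₁ ξ₂ = -φ₂ ξ₁ := by
    rw [← hC, hd, zero_smul, add_zero]
  refine ⟨ha, hb, hmain, ?_⟩
  intro x
  rw [heta₁ (φ₂ x), heta₂ (φ₁ x)]
  have h1 := hskew₂ x ξ₁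
  have h2 := hskew₁ x ξ₂
  have h3 : ⟪x, φ₁ ξ₂⟫ = -⟪x, φ₂ ξ₁⟫ := by rw [hmain, inner_neg_right]
  linarith
end
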